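/- Let Q be a symmetric n×n matrix and b ∈ R^n. If y* ∈ R^n and μ > 0 satisfy (Q + μI)y* + b = 0, ‖y*‖ = 1, vᵀ(Q+μI)v > 0 for all nonzero v with vᵀy* = 0, and Q + μI is not positive semidefinite, then y* is a strict local minimizer of y ↦ yᵀQy + 2bᵀy over {y : ‖y‖ ≤ 1} that is not a global minimizer. -/

import Mathlib

/-!
Write `M = Q + μI` and `d = y - y*`. Stationarity and `‖y*‖ = 1` give the exact expansion
`f y = f y* + dᵀ M d + μ (1 - ‖y‖²)`, whose last term is the nonnegative slack of the constraint.
By compactness, positivity of `M` on `y*ᗮ` becomes `dᵀ M d ≥ c ‖d‖² - λ ⟪d, y*⟫²` (Finsler).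
Feasibility forces `-⟪d, y*⟫ ≥ ‖d‖² / 2`, so `λ ⟪d, y*⟫² ≤ λ ‖d‖ (-⟪d, y*⟫)` is small compared with
`c ‖d‖²` plus the slack when `d` is small: `y*` is a strict local minimizer. A direction `v` with
`vᵀ M v < 0` is not orthogonal to `y*`, and reflecting `y*` in `vᗮ` stays on the unit sphere and
lowers `f` by `-τ² vᵀ M v`.
-/

open Matrix

/-- The trust region subproblem objective `yᵀQy + 2bᵀy`. -/
noncomputable def trsObj {n : ℕ} (Q : Matrix (Fin n) (Fin n) ℝ) (b : Fin n → ℝ)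
    (y : EuclideanSpace ℝ (Fin n)) : ℝ :=
  (∑ i, ∑ j, Q i j * y i * y j) + 2 * ∑ i, b i * y i

open RealInnerProductSpace

section TrustRegion

variable {E : Type*} [NormedAddCommGroup E] [InnerProductSpace ℝ E]

def trsObjective (T : E →ₗ[ℝ] E) (b y : E) : ℝ := ⟪T y, y⟫ + 2 * ⟪b, y⟫

theorem trsObjective_eq_add {T : E →ₗ[ℝ] E} (hT : T.IsSymmetric) {b ys : E} {μ : ℝ}
    (hstat : (T + μ • 1) ys + b = 0) (hnorm : ‖ys‖ = 1) (y : E) :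
    trsObjective T b y = trsObjective T b ys + ⟪(T + μ • 1) (y - ys), y - ys⟫ +
      μ * (1 - ‖y‖ ^ 2) := by
  obtain rfl : b = -T ys - μ • ys := by
    rw [← sub_eq_zero, ← hstat]
    simp only [LinearMap.add_apply, LinearMap.smul_apply, Module.End.one_apply]
    abel
  have hys : ⟪ys, ys⟫ = 1 := by rw [real_inner_self_eq_norm_sq, hnorm, one_pow]
  simp only [trsObjective, LinearMap.add_apply, LinearMap.smul_apply, Module.End.one_apply, map_sub,
    inner_sub_left, inner_sub_right, inner_add_left, inner_neg_left, real_inner_smul_left,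
    ← real_inner_self_eq_norm_sq, hys, hT ys y, real_inner_comm y ys, real_inner_comm (T y) ys]
  ring

theorem exists_pos_mul_norm_sq_le_inner_of_pos [FiniteDimensional ℝ E] (M : E →ₗ[ℝ] E)
    (K : Submodule ℝ E) (hpos : ∀ v ∈ K, v ≠ 0 → 0 < ⟪M v, v⟫) :
    ∃ c > 0, ∀ v ∈ K, c * ‖v‖ ^ 2 ≤ ⟪M v, v⟫ := by
  have hcont : Continuous fun v => ⟪M v, v⟫ := by
    have := M.continuous_of_finiteDimensional; fun_prop
  have hS : IsCompact (Metric.sphere (0 : E) 1 ∩ K) :=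
    (isCompact_sphere 0 1).inter_right K.closed_of_finiteDimensional
  obtain ⟨c, hc, hcS⟩ := hS.exists_forall_le' hcont.continuousOn fun v ⟨hv1, hvK⟩ =>
    hpos v hvK (ne_zero_of_mem_sphere one_ne_zero ⟨v, hv1⟩)
  refine ⟨c, hc, fun v hvK => ?_⟩
  rcases eq_or_ne v 0 with rfl | hv
  · simp
  have hnv : 0 < ‖v‖ := norm_pos_iff.mpr hv
  have hunit := hcS (‖v‖⁻¹ • v) ⟨by simp [norm_smul, hnv.ne'], K.smul_mem _ hvK⟩
  rw [map_smul, real_inner_smul_left, real_inner_smul_right] at hunit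
  calc c * ‖v‖ ^ 2 ≤ (‖v‖⁻¹ * (‖v‖⁻¹ * ⟪M v, v⟫)) * ‖v‖ ^ 2 := by gcongr
    _ = ⟪M v, v⟫ := by field_simp

theorem exists_pos_mul_norm_sq_le_inner_add_sq [FiniteDimensional ℝ E] {M : E →ₗ[ℝ] E}
    (hM : M.IsSymmetric) {u : E} (hu : ‖u‖ = 1)
    (hpos : ∀ v, v ≠ 0 → ⟪v, u⟫ = 0 → 0 < ⟪M v, v⟫) :
    ∃ c > 0, ∃ l > 0, ∀ d, c * ‖d‖ ^ 2 ≤ ⟪M d, d⟫ + l * ⟪d, u⟫ ^ 2 := by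
  obtain ⟨c, hc, hcK⟩ := exists_pos_mul_norm_sq_le_inner_of_pos M (ℝ ∙ u)ᗮ fun v hv hv0 =>
    hpos v hv0 (by rwa [Submodule.mem_orthogonal_singleton_iff_inner_left] at hv)
  set D := ⟪M u, u⟫
  set C := ‖M u‖
  refine ⟨c / 2, by positivity, |D| + 2 * C ^ 2 / c + c / 2, by positivity, fun d => ?_⟩
  set t := ⟪d, u⟫
  set w := d - t • u
  have hwu : ⟪w, u⟫ = 0 := by
    simp [w, t, inner_sub_left, real_inner_smul_left, hu]
  have hd : d = t • u + w := by simp [w]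
  have hnorm : ‖d‖ ^ 2 = t ^ 2 + ‖w‖ ^ 2 := by
    rw [hd, norm_add_sq_real, norm_smul, real_inner_smul_left, real_inner_comm, hwu, hu]
    simp [sq_abs]
  have hquad : ⟪M d, d⟫ = t ^ 2 * D + 2 * t * ⟪M u, w⟫ + ⟪M w, w⟫ := by
    rw [hd]
    simp only [map_add, map_smul, inner_add_left, inner_add_right, real_inner_smul_left,
      real_inner_smul_right, hM w u, real_inner_comm (M u) w]
    ring
  have hγ : c * ‖w‖ ^ 2 ≤ ⟪M w, w⟫ :=
    hcK w (Submodule.mem_orthogonal_singleton_iff_inner_left.mpr hwu)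
  have hβ : |⟪M u, w⟫| ≤ C * ‖w‖ := abs_real_inner_le_norm _ _
  have hamgm : 2 * |t| * (C * ‖w‖) ≤ c / 2 * ‖w‖ ^ 2 + 2 * C ^ 2 / c * t ^ 2 := by
    have hsq : c / 2 * ‖w‖ ^ 2 + 2 * C ^ 2 / c * t ^ 2 - 2 * |t| * (C * ‖w‖) =
        (c * ‖w‖ - 2 * C * |t|) ^ 2 / (2 * c) := by
      field_simp
      rw [← sq_abs t]
      ring
    have : 0 ≤ (c * ‖w‖ - 2 * C * |t|) ^ 2 / (2 * c) := by positivity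
    linarith
  have hcross : -(2 * |t| * (C * ‖w‖)) ≤ 2 * t * ⟪M u, w⟫ := by
    nlinarith [abs_le.mp hβ, abs_nonneg t, neg_abs_le t, le_abs_self t]
  rw [hnorm, hquad]
  nlinarith [neg_abs_le D, sq_nonneg t]

theorem trsObjective_isStrictLocalMin [FiniteDimensional ℝ E] {T : E →ₗ[ℝ] E}
    (hT : T.IsSymmetric) {b ys : E} {μ : ℝ} (hμ : 0 < μ)
    (hstat : (T + μ • 1) ys + b = 0) (hnorm : ‖ys‖ = 1)
    (hpos : ∀ v, v ≠ 0 → ⟪v, ys⟫ = 0 → 0 < ⟪(T + μ • 1) v, v⟫) :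
    ∃ ε > 0, ∀ y, ‖y‖ ≤ 1 → y ≠ ys → ‖y - ys‖ < ε →
      trsObjective T b ys < trsObjective T b y := by
  obtain ⟨c, hc, l, hl, hcoer⟩ := exists_pos_mul_norm_sq_le_inner_add_sq
    (hT.add (LinearMap.IsSymmetric.one.smul (conj_trivial μ))) hnorm hpos
  set m := min μ c
  have hm : 0 < m := lt_min hμ hc
  refine ⟨m / l, by positivity, fun y hy hne hyε => ?_⟩
  rw [trsObjective_eq_add hT hstat hnorm y, add_assoc, lt_add_iff_pos_right]
  set d := y - ys
  set a := ‖d‖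
  set t := ⟪d, ys⟫
  have ha : 0 < a := norm_pos_iff.mpr (sub_ne_zero.mpr hne)
  have hla : l * a ≤ m := ((lt_div_iff₀' hl).mp hyε).le
  have hslack : 1 - ‖y‖ ^ 2 = -2 * t - a ^ 2 := by
    rw [show y = ys + d by simp [d], norm_add_sq_real, real_inner_comm, hnorm]; ring
  have hfeas : 0 ≤ -2 * t - a ^ 2 := by
    rw [← hslack, sub_nonneg]; exact pow_le_one₀ (norm_nonneg y) hy
  have hta : -t ≤ a := by
    have := abs_real_inner_le_norm d ys
    rw [hnorm, mul_one] at this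
    linarith [neg_abs_le t]
  -- feasibility makes `-t` nonnegative and equal to `(slack + a²) / 2`
  have hlt : l * t ^ 2 ≤ m / 2 * (-2 * t - a ^ 2) + m / 2 * a ^ 2 := by
    have ht : 0 ≤ -t := by nlinarith
    calc l * t ^ 2 = l * (-t) * (-t) := by ring
      _ ≤ l * a * (-t) := by gcongr
      _ ≤ m * (-t) := by gcongr
      _ = m / 2 * (-2 * t - a ^ 2) + m / 2 * a ^ 2 := by ring
  have hc_half : m / 2 * a ^ 2 ≤ (c - m / 2) * a ^ 2 := by
    gcongr; linarith [min_le_right μ c]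
  have hμ_half : 0 ≤ (μ - m / 2) * (-2 * t - a ^ 2) :=
    mul_nonneg (by linarith [min_le_left μ c]) hfeas
  have ha_sq : 0 < m / 2 * a ^ 2 := by positivity
  rw [hslack]
  linarith [hcoer d]

theorem exists_norm_eq_one_trsObjective_lt {T : E →ₗ[ℝ] E} (hT : T.IsSymmetric) {b ys : E}
    {μ : ℝ} (hstat : (T + μ • 1) ys + b = 0) (hnorm : ‖ys‖ = 1)
    (hpos : ∀ v, v ≠ 0 → ⟪v, ys⟫ = 0 → 0 < ⟪(T + μ • 1) v, v⟫) {v : E}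
    (hv : ⟪(T + μ • 1) v, v⟫ < 0) :
    ∃ y, ‖y‖ = 1 ∧ trsObjective T b y < trsObjective T b ys := by
  have hv0 : v ≠ 0 := by rintro rfl; simp at hv
  have hvys : ⟪v, ys⟫ ≠ 0 := fun h => (hpos v hv0 h).not_gt hv
  have hvn : ‖v‖ ≠ 0 := norm_ne_zero_iff.mpr hv0
  -- `ys + τ • v` is the mirror image of `ys` in the hyperplane `vᗮ`
  set τ := -2 * ⟪v, ys⟫ / ‖v‖ ^ 2
  have hτ : τ ≠ 0 := div_ne_zero (mul_ne_zero (by norm_num) hvys) (pow_ne_zero 2 hvn)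
  have hτv : τ * ‖v‖ ^ 2 = -2 * ⟪v, ys⟫ := div_mul_cancel₀ _ (pow_ne_zero 2 hvn)
  have hnorm' : ‖ys + τ • v‖ = 1 := by
    rw [← pow_eq_one_iff_of_nonneg (norm_nonneg _) two_ne_zero, norm_add_sq_real, norm_smul,
      real_inner_smul_right, real_inner_comm, hnorm, mul_pow, Real.norm_eq_abs, sq_abs]
    linear_combination τ * hτv
  refine ⟨ys + τ • v, hnorm', ?_⟩
  rw [trsObjective_eq_add hT hstat hnorm, add_sub_cancel_left, hnorm', map_smul,
    real_inner_smul_left, real_inner_smul_right]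
  nlinarith [sq_pos_of_ne_zero hτ]

end TrustRegion

section Matrix

variable {ι : Type*} [Fintype ι]

theorem EuclideanSpace.real_inner_eq_sum (x y : EuclideanSpace ℝ ι) :
    ⟪x, y⟫ = ∑ i, x i * y i := by
  simp [PiLp.inner_apply, mul_comm]

variable [DecidableEq ι]

theorem Matrix.dotProduct_mulVec_self_eq_inner (M : Matrix ι ι ℝ) (v : ι → ℝ) :
    v ⬝ᵥ M *ᵥ v = ⟪toEuclideanLin M (WithLp.toLp 2 v), WithLp.toLp 2 v⟫ := by
  simp [EuclideanSpace.inner_toLp_toLp]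

theorem Matrix.toEuclideanLin_add_smul_one (M : Matrix ι ι ℝ) (μ : ℝ) :
    toEuclideanLin (M + μ • 1) = toEuclideanLin M + μ • 1 := by
  rw [map_add, map_smul, toLpLin_one]
  rfl

end Matrix

theorem trsObj_eq_trsObjective {n : ℕ} (Q : Matrix (Fin n) (Fin n) ℝ) (b : Fin n → ℝ)
    (y : EuclideanSpace ℝ (Fin n)) :
    trsObj Q b y = trsObjective (toEuclideanLin Q) (WithLp.toLp 2 b) y := by
  simp only [trsObj, trsObjective, EuclideanSpace.real_inner_eq_sum, ofLp_toLpLin, toLin'_apply,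
    mulVec, dotProduct, Finset.sum_mul]
  congr 1
  exact Finset.sum_congr rfl fun i _ => Finset.sum_congr rfl fun j _ => mul_right_comm _ _ _

theorem stmt15 {n : ℕ} (Q : Matrix (Fin n) (Fin n) ℝ) (hQ : Qᵀ = Q) (b : Fin n → ℝ)
    (ys : EuclideanSpace ℝ (Fin n)) (μ : ℝ) (hμ : 0 < μ)
    (hstat : (Q + μ • (1 : Matrix (Fin n) (Fin n) ℝ)).mulVec (fun i => ys i) + b = 0)
    (hnorm : ‖ys‖ = 1)
    (hsos : ∀ v : Fin n → ℝ, v ≠ 0 → (∑ i, v i * ys i) = 0 →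
      0 < v ⬝ᵥ (Q + μ • (1 : Matrix (Fin n) (Fin n) ℝ)).mulVec v)
    (hnpsd : ¬ ∀ v : Fin n → ℝ, 0 ≤ v ⬝ᵥ (Q + μ • (1 : Matrix (Fin n) (Fin n) ℝ)).mulVec v) :
    (∃ ε > 0, ∀ y : EuclideanSpace ℝ (Fin n), ‖y‖ ≤ 1 → y ≠ ys → ‖y - ys‖ < ε →
      trsObj Q b ys < trsObj Q b y) ∧
    ¬ (∀ y : EuclideanSpace ℝ (Fin n), ‖y‖ ≤ 1 → trsObj Q b ys ≤ trsObj Q b y) := by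
  set T := toEuclideanLin Q
  have hT : T.IsSymmetric := isSymmetric_toEuclideanLin_iff.mpr <| by
    rwa [IsHermitian, conjTranspose_eq_transpose_of_trivial]
  have hshift := toEuclideanLin_add_smul_one Q μ
  have hstat' : (T + μ • 1) ys + WithLp.toLp 2 b = 0 := by
    rw [← hshift]
    exact congrArg (WithLp.toLp 2) hstat
  have hpos (v : EuclideanSpace ℝ (Fin n)) (hv : v ≠ 0) (hvys : ⟪v, ys⟫ = 0) :
      0 < ⟪(T + μ • 1) v, v⟫ := by
    rw [← hshift, ← dotProduct_mulVec_self_eq_inner]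
    exact hsos _ (by simpa using hv) (by rwa [EuclideanSpace.real_inner_eq_sum] at hvys)
  obtain ⟨v, hv⟩ : ∃ v : EuclideanSpace ℝ (Fin n), ⟪(T + μ • 1) v, v⟫ < 0 := by
    obtain ⟨v, hv⟩ := not_forall.mp hnpsd
    refine ⟨WithLp.toLp 2 v, ?_⟩
    rw [← hshift, ← dotProduct_mulVec_self_eq_inner]
    exact not_le.mp hv
  simp only [trsObj_eq_trsObjective]
  refine ⟨trsObjective_isStrictLocalMin hT hμ hstat' hnorm hpos, fun hglob => ?_⟩
  obtain ⟨y, hy, hlt⟩ := exists_norm_eq_one_trsObjective_lt hT hstat' hnorm hpos hv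
  exact (hglob y hy.le).not_gt hlt
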